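/- Let π = N(μ, Σ) and q = N(m, CC^⊤) be Gaussian distributions on ℝ^d with Σ and CC^⊤ positive definite. Then the Fisher–Hyvärinen divergence D_F(q, π) = E_{z∼q}‖∇log π(z) − ∇log q(z)‖₂² equals ‖Σ⁻¹C − C^{−⊤}‖_F² + ‖Σ⁻¹(m − μ)‖₂². -/

import Mathlib

open MeasureTheory Matrix

theorem gaussian_fisher_divergence {Ω : Type*} [MeasureSpace Ω]
    (hP : IsProbabilityMeasure (volume : Measure Ω))
    (d : ℕ) (μv m : Fin d → ℝ) (Sig C : Matrix (Fin d) (Fin d) ℝ)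
    (hSig : Sig.PosDef) (hCC : (C * Cᵀ).PosDef) (hC : IsUnit C.det)
    (u : Ω → Fin d → ℝ) (hmeas : Measurable u)
    (h1 : ∀ i, ∫ ω, u ω i = 0)
    (h2 : ∀ i j, ∫ ω, u ω i * u ω j = if i = j then (1:ℝ) else 0)
    (h3 : ∀ i j l, ∫ ω, u ω i * u ω j * u ω l = 0)
    (hint1 : ∀ i, Integrable (fun ω => u ω i))
    (hint2 : ∀ i j, Integrable (fun ω => u ω i * u ω j)) :
    ∫ ω, ∑ i,
      ((-(Sig⁻¹.mulVec (C.mulVec (u ω) + m - μv))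
        + (C * Cᵀ)⁻¹.mulVec (C.mulVec (u ω))) i)^2
      = (∑ i, ∑ j, ((Sig⁻¹ * C - (C⁻¹)ᵀ) i j)^2)
        + ∑ i, ((Sig⁻¹.mulVec (m - μv)) i)^2 := by
  set A : Matrix (Fin d) (Fin d) ℝ := Sig⁻¹ * C - (C⁻¹)ᵀ with hA
  set b : Fin d → ℝ := Sig⁻¹.mulVec (m - μv) with hb
  have key : ∀ v : Fin d → ℝ, ((C * Cᵀ)⁻¹).mulVec (C.mulVec v) = ((C⁻¹)ᵀ).mulVec v := by
    intro v
    rw [Matrix.mul_inv_rev, Matrix.mulVec_mulVec, Matrix.transpose_nonsing_inv,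
      Matrix.mul_assoc, Matrix.nonsing_inv_mul _ hC, Matrix.mul_one,
      ← Matrix.transpose_nonsing_inv]
  have hpt : ∀ ω, (∑ i, ((-(Sig⁻¹.mulVec (C.mulVec (u ω) + m - μv))
        + (C * Cᵀ)⁻¹.mulVec (C.mulVec (u ω))) i)^2)
      = ∑ i, ((∑ j, ∑ k, (A i j * A i k) * (u ω j * u ω k))
          + (∑ j, (2 * b i * A i j) * u ω j) + (b i)^2) := by
    intro ω
    refine Finset.sum_congr rfl (fun i _ => ?_)
    have e1 : (-(Sig⁻¹.mulVec (C.mulVec (u ω) + m - μv))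
        + (C * Cᵀ)⁻¹.mulVec (C.mulVec (u ω))) i
        = -((A.mulVec (u ω)) i + b i) := by
      rw [key]
      simp only [hA, hb, Matrix.sub_mulVec, Matrix.mulVec_add, Matrix.mulVec_sub,
        Matrix.mulVec_mulVec, Pi.add_apply, Pi.sub_apply, Pi.neg_apply]
      ring
    rw [e1, neg_sq]
    have e2 : (A.mulVec (u ω)) i = ∑ j, A i j * u ω j := by
      simp [Matrix.mulVec, dotProduct]
    rw [e2, add_sq]
    have esq : (∑ j, A i j * u ω j) ^ 2
        = ∑ j, ∑ k, (A i j * A i k) * (u ω j * u ω k) := by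
      rw [sq, Finset.sum_mul_sum]
      exact Finset.sum_congr rfl fun j _ => Finset.sum_congr rfl fun k _ => by ring
    have ecross : 2 * (∑ j, A i j * u ω j) * b i
        = ∑ j, (2 * b i * A i j) * u ω j := by
      rw [Finset.mul_sum, Finset.sum_mul]
      exact Finset.sum_congr rfl fun j _ => by ring
    rw [esq, ecross]
  have hI1 : ∀ i j k : Fin d, Integrable (fun ω => (A i j * A i k) * (u ω j * u ω k)) :=
    fun i j k => (hint2 j k).const_mul _
  have hI2 : ∀ i j : Fin d, Integrable (fun ω => (2 * b i * A i j) * u ω j) :=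
    fun i j => (hint1 j).const_mul _
  have hIin : ∀ i : Fin d, Integrable (fun ω =>
      (∑ j, ∑ k, (A i j * A i k) * (u ω j * u ω k))
        + (∑ j, (2 * b i * A i j) * u ω j) + (b i)^2) := by
    intro i
    exact (((integrable_finset_sum _ (fun j _ =>
      integrable_finset_sum _ (fun k _ => hI1 i j k))).add
      (integrable_finset_sum _ (fun j _ => hI2 i j))).add (integrable_const _))
  calc ∫ ω, ∑ i, ((-(Sig⁻¹.mulVec (C.mulVec (u ω) + m - μv))
        + (C * Cᵀ)⁻¹.mulVec (C.mulVec (u ω))) i)^2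
      = ∫ ω, ∑ i, ((∑ j, ∑ k, (A i j * A i k) * (u ω j * u ω k))
          + (∑ j, (2 * b i * A i j) * u ω j) + (b i)^2) := by
        exact integral_congr_ae (Filter.Eventually.of_forall hpt)
    _ = ∑ i, ∫ ω, ((∑ j, ∑ k, (A i j * A i k) * (u ω j * u ω k))
          + (∑ j, (2 * b i * A i j) * u ω j) + (b i)^2) := by
        exact integral_finset_sum _ (fun i _ => hIin i)
    _ = ∑ i, ((∑ j, ∑ k, (A i j * A i k) * (if j = k then (1:ℝ) else 0))
          + (∑ j, (2 * b i * A i j) * 0) + (b i)^2) := by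
        refine Finset.sum_congr rfl (fun i _ => ?_)
        have hX : Integrable (fun ω => ∑ j, ∑ k, (A i j * A i k) * (u ω j * u ω k))
            (volume : Measure Ω) :=
          integrable_finset_sum _ (fun j _ => integrable_finset_sum _ (fun k _ => hI1 i j k))
        have hY : Integrable (fun ω => ∑ j, (2 * b i * A i j) * u ω j)
            (volume : Measure Ω) := integrable_finset_sum _ (fun j _ => hI2 i j)
        have hXY : Integrable (fun ω => (∑ j, ∑ k, (A i j * A i k) * (u ω j * u ω k))
            + (∑ j, (2 * b i * A i j) * u ω j)) (volume : Measure Ω) := hX.add hY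
        rw [integral_add hXY (integrable_const _), integral_add hX hY,
          integral_finset_sum _ (fun j _ =>
            integrable_finset_sum _ (fun k _ => hI1 i j k)),
          integral_finset_sum _ (fun j _ => hI2 i j), integral_const]
        simp only [probReal_univ, measure_univ, ENNReal.toReal_one, one_smul]
        congr 1
        congr 1
        · refine Finset.sum_congr rfl fun j _ => ?_
          rw [integral_finset_sum _ (fun k _ => hI1 i j k)]
          exact Finset.sum_congr rfl fun k _ => by rw [integral_const_mul, h2]
        · exact Finset.sum_congr rfl fun j _ => by rw [integral_const_mul, h1]
    _ = (∑ i, ∑ j, (A i j)^2) + ∑ i, (b i)^2 := by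
        rw [← Finset.sum_add_distrib]
        refine Finset.sum_congr rfl fun i _ => ?_
        simp [Finset.mul_sum, mul_ite, Finset.sum_ite_eq, sq]
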